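/- Let H be a k-colored r-graph (k ≥ r ≥ 2), let s ≥ 1, and let H(s) be the blow-up of H. If π_n(H) → c as n → ∞, then also π_n(H(s)) → c as n → ∞; that is, π(H(s)) = π(H). -/

import Mathlib

open Finset Filter

structure ColGraph (k r n : ℕ) where
  E : Fin k → Finset (Finset (Fin n))
  card_mem : ∀ i : Fin k, ∀ e ∈ E i, e.card = r

namespace ColGraph

def IsSubgraph {k r m n : ℕ} (H : ColGraph k r m) (G : ColGraph k r n) : Prop :=
  ∃ f : Fin m → Fin n, Function.Injective f ∧
    ∀ i : Fin k, ∀ e ∈ H.E i, e.image f ∈ G.E i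

noncomputable def density {k r n : ℕ} (G : ColGraph k r n) : ℝ :=
  (∑ i : Fin k, ((G.E i).card : ℝ)) / (n.choose r : ℝ)

noncomputable def turanDensityN {k r m : ℕ} (H : ColGraph k r m) (n : ℕ) : ℝ :=
  sSup {x : ℝ | ∃ G : ColGraph k r n, ¬ H.IsSubgraph G ∧ G.density = x}

def IsHom {k r m p : ℕ} (G : ColGraph k r m) (H : ColGraph k r p) (f : Fin m → Fin p) : Prop :=
  ∀ i : Fin k, ∀ e ∈ G.E i, Set.InjOn f ↑e ∧ e.image f ∈ H.E i

def Colorable {k r m p : ℕ} (G : ColGraph k r m) (H : ColGraph k r p) : Prop :=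
  ∃ f : Fin m → Fin p, G.IsHom H f

def blowUp {k r m : ℕ} (H : ColGraph k r m) (s : ℕ) : ColGraph k r (m * s) where
  E i := Finset.univ.filter (fun e : Finset (Fin (m * s)) =>
    e.card = r ∧ e.image (fun x => (finProdFinEquiv.symm x).1) ∈ H.E i)
  card_mem i e he := (Finset.mem_filter.mp he).2.1

end ColGraph

noncomputable def famTuranDensityN {k r : ℕ} {ι : Type*} {v : ι → ℕ}
    (Hs : ∀ i, ColGraph k r (v i)) (n : ℕ) : ℝ :=
  sSup {x : ℝ | ∃ G : ColGraph k r n, (∀ i, ¬ (Hs i).IsSubgraph G) ∧ G.density = x}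

def prodGraph {m p : ℕ} (G₁ : ColGraph 2 2 m) (G₂ : ColGraph 2 2 p) : ColGraph 2 2 (m * p) where
  E i := Finset.univ.filter (fun e : Finset (Fin (m * p)) =>
    e.card = 2 ∧ e.image (fun x => (finProdFinEquiv.symm x).1) ∈ G₁.E i ∧
      e.image (fun x => (finProdFinEquiv.symm x).2) ∈ G₂.E i)
  card_mem i e he := (Finset.mem_filter.mp he).2.1

def IsBipartite {n : ℕ} (G : ColGraph 2 2 n) : Prop :=
  ∀ i : Fin 2, ∃ part : Fin n → Bool, ∀ e ∈ G.E i, ∃ u ∈ e, ∃ v ∈ e, part u ≠ part v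

def mk2 {n : ℕ} (R B : Finset (Finset (Fin n)))
    (hR : ∀ e ∈ R, e.card = 2) (hB : ∀ e ∈ B, e.card = 2) : ColGraph 2 2 n where
  E := fun i => if i = 0 then R else B
  card_mem := by
    intro i e he
    try dsimp only at he
    split at he
    · exact hR e he
    · exact hB e he

def Tgraph : ColGraph 2 2 4 :=
  mk2 {{0,1},{0,2},{2,3}} {{0,1},{1,2},{2,3}} (by decide) (by decide)

def K3 : ColGraph 2 2 3 :=
  mk2 {{0,1},{0,2},{1,2}} {{0,1},{0,2},{1,2}} (by decide) (by decide)

def K3minus : ColGraph 2 2 3 :=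
  mk2 {{0,1},{0,2},{1,2}} {{0,1},{0,2}} (by decide) (by decide)

def T1 : ColGraph 2 2 4 :=
  mk2 {{0,1},{2,3},{0,2},{1,3}} {{0,1},{2,3},{0,3},{1,2}} (by decide) (by decide)

def T2 : ColGraph 2 2 4 :=
  mk2 {{0,1},{0,3},{1,2},{1,3},{2,3}} {{0,1},{0,2},{0,3},{1,2},{2,3}} (by decide) (by decide)

set_option maxRecDepth 40000 in
def H8 : ColGraph 2 2 8 :=
  mk2 {{0,1},{0,2},{1,3},{2,3},{0,5},{2,6},{3,7},{1,4},{2,4},{0,7},{3,5},{1,6}}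
      {{4,5},{4,6},{5,7},{6,7},{1,5},{0,4},{3,6},{2,7},{2,4},{0,7},{3,5},{1,6}}
      (by decide) (by decide)

structure Graph23 (n : ℕ) where
  E2 : Finset (Finset (Fin n))
  E3 : Finset (Finset (Fin n))
  card2 : ∀ e ∈ E2, e.card = 2
  card3 : ∀ e ∈ E3, e.card = 3

namespace Graph23

noncomputable def density {n : ℕ} (G : Graph23 n) : ℝ :=
  (G.E2.card : ℝ) / (n.choose 2 : ℝ) + (G.E3.card : ℝ) / (n.choose 3 : ℝ)

def IsSubgraph {m n : ℕ} (H : Graph23 m) (G : Graph23 n) : Prop :=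
  ∃ f : Fin m → Fin n, Function.Injective f ∧
    (∀ e ∈ H.E2, e.image f ∈ G.E2) ∧ (∀ e ∈ H.E3, e.image f ∈ G.E3)

noncomputable def turanDensityN {m : ℕ} (H : Graph23 m) (n : ℕ) : ℝ :=
  sSup {x : ℝ | ∃ G : Graph23 n, ¬ H.IsSubgraph G ∧ G.density = x}

end Graph23

def lift23 {m : ℕ} (H : ColGraph 2 2 m) : Graph23 (m + 1) where
  E2 := (H.E 0).image (fun e => e.image Fin.castSucc)
  E3 := (H.E 1).image (fun e => insert (Fin.last m) (e.image Fin.castSucc))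
  card2 := by
    intro e he
    simp only [Finset.mem_image] at he
    obtain ⟨e0, he0, rfl⟩ := he
    rw [Finset.card_image_of_injective _ (Fin.castSucc_injective m)]
    exact H.card_mem 0 e0 he0
  card3 := by
    intro e he
    simp only [Finset.mem_image] at he
    obtain ⟨e0, he0, rfl⟩ := he
    rw [Finset.card_insert_of_notMem (by
      intro h
      simp only [Finset.mem_image] at h
      obtain ⟨x, _, hx⟩ := h
      exact (Fin.castSucc_lt_last x).ne hx)]
    rw [Finset.card_image_of_injective _ (Fin.castSucc_injective m), H.card_mem 1 e0 he0]

def H5 : Graph23 5 where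
  E2 := {{0,1},{0,2},{2,3}}
  E3 := {{0,1,4},{0,2,4},{2,3,4}}
  card2 := by decide
  card3 := by decide

/-!
Since `H ⊆ H(s)`, `π_n(H) ≤ π_n(H(s))`. Conversely, let `G` on `n` vertices have density at least
`π_N(H) + δ`. Averaging the densities of the graphs induced on the `N`-subsets shows that a
proportion `δ / k` of them contain a copy of `H` (supersaturation), so `G` admits at least `γ n ^ m`
embeddings of `H`, with `γ > 0` independent of `n`. Erdős's box argument (induction on `m`, each
step a Kővári–Sós–Turán double count) finds in any such family of maps `Fin m → Fin n` a full box
`W 0 × ⋯ × W (m - 1)` with `#(W j) = s`, and a box of embeddings of `H` carries a copy of `H(s)`.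
-/

lemma pow_div_factorial_le_choose {x : ℝ} {d s : ℕ} (hx : 0 ≤ x) (h : x + s ≤ d + 1) :
    x ^ s / s.factorial ≤ d.choose s := by
  have hsd : s ≤ d + 1 := by exact_mod_cast (le_add_of_nonneg_left hx).trans h
  calc x ^ s / s.factorial ≤ ((d + 1 - s : ℕ) : ℝ) ^ s / s.factorial := by
        gcongr
        rw [Nat.cast_sub hsd]
        push_cast
        linarith
    _ ≤ d.choose s := Nat.pow_le_choose s d

lemma half_mul_card_le_card_filter {ι : Type*} (s : Finset ι) (f : ι → ℝ) {M δ : ℝ} (hM : 0 < M)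
    (hδ : 0 ≤ δ) (hf : ∀ i ∈ s, f i ≤ M) (hsum : δ * M * #s ≤ ∑ i ∈ s, f i) :
    δ / 2 * #s ≤ #{i ∈ s | δ / 2 * M ≤ f i} := by
  have hbig : ∑ i ∈ s with δ / 2 * M ≤ f i, f i ≤ #{i ∈ s | δ / 2 * M ≤ f i} * M := by
    rw [← nsmul_eq_mul]
    exact sum_le_card_nsmul _ _ _ fun i hi => hf i (mem_filter.1 hi).1
  have hsmall : ∑ i ∈ s with ¬ δ / 2 * M ≤ f i, f i ≤ #s * (δ / 2 * M) := by
    calc _ ≤ #{i ∈ s | ¬ δ / 2 * M ≤ f i} • (δ / 2 * M) :=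
          sum_le_card_nsmul _ _ _ fun i hi => (not_le.1 (mem_filter.1 hi).2).le
      _ ≤ #s • (δ / 2 * M) :=
          nsmul_le_nsmul_left (by positivity) (card_le_card (filter_subset _ _))
      _ = _ := nsmul_eq_mul _ _
  have hsplit := sum_filter_add_sum_filter_not s (fun i => δ / 2 * M ≤ f i) f
  refine le_of_mul_le_mul_right ?_ hM
  linarith

open scoped Classical in
/-- Kővári–Sós–Turán double counting, over the indices `a` with `#(D a) ≥ δ n / 2`. -/
lemma exists_card_eq_and_le_card_filter_subset {α : Type*} [Fintype α] {n s : ℕ}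
    (D : α → Finset (Fin n)) {δ : ℝ} (hδ : 0 ≤ δ) (hn : 0 < n) (hsn : s ≤ n)
    (hs : (s : ℝ) ≤ δ / 4 * n) (hD : δ * n * Fintype.card α ≤ ∑ a, (#(D a) : ℝ)) :
    ∃ U : Finset (Fin n), #U = s ∧
      δ / 2 * ((δ / 4) ^ s / s.factorial) * Fintype.card α ≤ #{a | U ⊆ D a} := by
  set B : Finset α := {a | δ / 2 * n ≤ #(D a)}
  have hB : δ / 2 * Fintype.card α ≤ #B :=
    half_mul_card_le_card_filter univ (fun a => (#(D a) : ℝ)) (by positivity) hδ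
      (fun a _ => by simpa using card_le_univ (D a)) (by simpa using hD)
  have hchoose : ∀ a ∈ B, (δ / 4 * n) ^ s / s.factorial ≤ (#(D a)).choose s := fun a ha =>
    pow_div_factorial_le_choose (by positivity) (by linarith [(mem_filter.1 ha).2])
  have hdouble : ∑ U ∈ powersetCard s univ, #{a | U ⊆ D a} = ∑ a, (#(D a)).choose s :=
    calc ∑ U ∈ powersetCard s univ, #{a | U ⊆ D a}
        = ∑ a, #{U ∈ powersetCard s univ | U ⊆ D a} :=
          sum_card_bipartiteAbove_eq_sum_card_bipartiteBelow fun U a => U ⊆ D a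
      _ = ∑ a, (#(D a)).choose s := sum_congr rfl fun a _ => by
          rw [← card_powersetCard]
          congr 1
          ext U
          simp [and_comm]
  have hsum : (n.choose s : ℝ) * (δ / 2 * ((δ / 4) ^ s / s.factorial) * Fintype.card α)
      ≤ ∑ U ∈ powersetCard s univ, (#{a | U ⊆ D a} : ℝ) := by
    calc (n.choose s : ℝ) * (δ / 2 * ((δ / 4) ^ s / s.factorial) * Fintype.card α)
        ≤ n ^ s * (δ / 2 * ((δ / 4) ^ s / s.factorial) * Fintype.card α) := by
          gcongr
          exact_mod_cast Nat.choose_le_pow n s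
      _ = δ / 2 * Fintype.card α * ((δ / 4 * n) ^ s / s.factorial) := by ring
      _ ≤ ∑ _a ∈ B, (δ / 4 * n) ^ s / s.factorial := by
          rw [sum_const, nsmul_eq_mul]
          gcongr
      _ ≤ ∑ a ∈ B, ((#(D a)).choose s : ℝ) := sum_le_sum hchoose
      _ ≤ ∑ a, ((#(D a)).choose s : ℝ) :=
          sum_le_sum_of_subset_of_nonneg (filter_subset _ _) fun _ _ _ => by positivity
      _ = _ := by exact_mod_cast hdouble.symm
  have hne : (powersetCard s (univ : Finset (Fin n))).Nonempty :=
    powersetCard_nonempty.2 (by simpa using hsn)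
  obtain ⟨U, hU, hUcard⟩ := exists_le_of_sum_le hne
    (f := fun _ => δ / 2 * ((δ / 4) ^ s / s.factorial) * Fintype.card α)
    (g := fun U => (#{a | U ⊆ D a} : ℝ)) (by
      rw [sum_const, card_powersetCard, card_univ, Fintype.card_fin, nsmul_eq_mul]
      exact hsum)
  exact ⟨U, (mem_powersetCard.1 hU).2, hUcard⟩

lemma Fin.sum_card_filter_cons_mem {α : Type*} [Fintype α] [DecidableEq α] {m : ℕ}
    (T : Finset (Fin (m + 1) → α)) :
    ∑ f : Fin m → α, #{u | (Fin.cons u f : Fin (m + 1) → α) ∈ T} = #T := by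
  simp only [card_filter]
  rw [← Fintype.sum_prod_type_right'
    (fun u f => if (Fin.cons u f : Fin (m + 1) → α) ∈ T then 1 else 0)]
  exact ((Fin.consEquiv fun _ => α).sum_comp fun g => if g ∈ T then 1 else 0).trans (by simp)

theorem eventually_exists_piFinset_subset (s m : ℕ) {δ : ℝ} (hδ : 0 < δ) :
    ∀ᶠ n in atTop, ∀ T : Finset (Fin m → Fin n), δ * n ^ m ≤ #T →
      ∃ W : Fin m → Finset (Fin n), (∀ j, #(W j) = s) ∧ Fintype.piFinset W ⊆ T := by
  induction m generalizing δ with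
  | zero =>
    refine Eventually.of_forall fun n T hT => ⟨finZeroElim, finZeroElim, fun g _ => ?_⟩
    have hT₀ : (0 : ℝ) < #T := hδ.trans_le (by simpa using hT)
    obtain ⟨g₀, hg₀⟩ := card_pos.1 (by exact_mod_cast hT₀)
    rwa [Subsingleton.elim g g₀]
  | succ m ih =>
    have hlarge : ∀ᶠ n : ℕ in atTop, (s : ℝ) ≤ δ / 4 * n :=
      (tendsto_natCast_atTop_atTop.const_mul_atTop (by positivity)).eventually_ge_atTop _
    filter_upwards [ih (δ := δ / 2 * ((δ / 4) ^ s / s.factorial)) (by positivity), hlarge,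
      eventually_ge_atTop s, eventually_gt_atTop 0] with n hbox hsδ hsn hn T hT
    set D : (Fin m → Fin n) → Finset (Fin n) :=
      fun f => {u | (Fin.cons u f : Fin (m + 1) → Fin n) ∈ T}
    have hD : δ * n * Fintype.card (Fin m → Fin n) ≤ ∑ f, (#(D f) : ℝ) := by
      rw [← Nat.cast_sum, Fin.sum_card_filter_cons_mem T]
      simpa [pow_succ, mul_comm, mul_left_comm, mul_assoc] using hT
    obtain ⟨U, hU, hmany⟩ := exists_card_eq_and_le_card_filter_subset D hδ.le hn hsn hsδ hD
    obtain ⟨W, hW, hWT⟩ := hbox {f | U ⊆ D f} (by simpa using hmany)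
    refine ⟨Fin.cons U W, fun j => ?_, fun g hg => ?_⟩
    · cases j using Fin.cases <;> simp [hU, hW]
    · rw [Fin.mem_piFinset_iff_zero_tail] at hg
      simp only [Fin.cons_zero, Fin.tail_cons] at hg
      have hg0 := (mem_filter.1 (hWT hg.2)).2 hg.1
      rw [← Fin.cons_self_tail g]
      simpa [D] using hg0

namespace ColGraph

variable {k r m n N s : ℕ}

section Density

lemma card_E_le_choose (G : ColGraph k r n) (i : Fin k) : #(G.E i) ≤ n.choose r := by
  simpa using card_le_card fun e he => mem_powersetCard.2 ⟨subset_univ e, G.card_mem i e he⟩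

lemma density_nonneg (G : ColGraph k r n) : 0 ≤ G.density := by
  unfold density
  positivity

lemma density_le (G : ColGraph k r n) : G.density ≤ k := by
  unfold density
  rcases (n.choose r).eq_zero_or_pos with h | h
  · simp [h]
  rw [div_le_iff₀ (by positivity)]
  calc ∑ i, (#(G.E i) : ℝ) ≤ ∑ _i : Fin k, (n.choose r : ℝ) :=
        sum_le_sum fun i _ => mod_cast G.card_E_le_choose i
    _ = k * n.choose r := by simp

lemma density_le_turanDensityN {H : ColGraph k r m} {G : ColGraph k r n}
    (h : ¬ H.IsSubgraph G) : G.density ≤ H.turanDensityN n :=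
  le_csSup ⟨k, by rintro _ ⟨G', -, rfl⟩; exact G'.density_le⟩ ⟨G, h, rfl⟩

lemma turanDensityN_nonneg (H : ColGraph k r m) (n : ℕ) : 0 ≤ H.turanDensityN n :=
  Real.sSup_nonneg <| by rintro _ ⟨G, -, rfl⟩; exact G.density_nonneg

end Density

section Embedding

def IsEmbedding (H : ColGraph k r m) (G : ColGraph k r n) (f : Fin m → Fin n) : Prop :=
  Function.Injective f ∧ ∀ i, ∀ e ∈ H.E i, e.image f ∈ G.E i

lemma IsEmbedding.comp {p : ℕ} {H : ColGraph k r m} {K : ColGraph k r p} {G : ColGraph k r n}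
    {f : Fin m → Fin p} {g : Fin p → Fin n} (hg : K.IsEmbedding G g) (hf : H.IsEmbedding K f) :
    H.IsEmbedding G (g ∘ f) :=
  ⟨hg.1.comp hf.1, fun i e he => by rw [← image_image]; exact hg.2 i _ (hf.2 i e he)⟩

lemma IsSubgraph.trans {p : ℕ} {H : ColGraph k r m} {K : ColGraph k r p} {G : ColGraph k r n}
    (hHK : H.IsSubgraph K) (hKG : K.IsSubgraph G) : H.IsSubgraph G :=
  let ⟨_, hf⟩ := hHK
  let ⟨_, hg⟩ := hKG
  ⟨_, IsEmbedding.comp hg hf⟩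

lemma turanDensityN_mono {p : ℕ} {H : ColGraph k r m} {K : ColGraph k r p}
    (h : H.IsSubgraph K) (n : ℕ) : H.turanDensityN n ≤ K.turanDensityN n :=
  Real.sSup_le (by rintro _ ⟨G, hG, rfl⟩; exact density_le_turanDensityN fun hK => hG (h.trans hK))
    (K.turanDensityN_nonneg n)

lemma isSubgraph_blowUp (H : ColGraph k r m) (hs : 1 ≤ s) : H.IsSubgraph (H.blowUp s) := by
  set f : Fin m → Fin (m * s) := fun u => finProdFinEquiv (u, ⟨0, hs⟩)
  have hf : Function.Injective f := fun a b hab => congrArg Prod.fst (finProdFinEquiv.injective hab)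
  refine ⟨f, hf, fun i e he => mem_filter.2 ⟨mem_univ _, ?_, ?_⟩⟩
  · rw [card_image_of_injective _ hf, H.card_mem i e he]
  · have hproj : (fun x => (finProdFinEquiv.symm x).1) ∘ f = id :=
      funext fun u => by simp only [f, Function.comp_apply, Equiv.symm_apply_apply, id]
    rwa [image_image, hproj, image_id]

end Embedding

section Restriction

def comap (G : ColGraph k r n) (f : Fin N ↪ Fin n) : ColGraph k r N where
  E i := {e | e.map f ∈ G.E i}
  card_mem i e he := by rw [← card_map f]; exact G.card_mem i _ (mem_filter.1 he).2

lemma IsEmbedding.of_comap {H : ColGraph k r m} {G : ColGraph k r n} {f : Fin N ↪ Fin n}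
    {g : Fin m → Fin N} (hg : H.IsEmbedding (G.comap f) g) : H.IsEmbedding G (f ∘ g) :=
  ⟨f.injective.comp hg.1, fun i e he => by
    rw [← image_image, ← map_eq_image]; exact (mem_filter.1 (hg.2 i e he)).2⟩

lemma card_E_comap (G : ColGraph k r n) (f : Fin N ↪ Fin n) (i : Fin k) :
    #((G.comap f).E i) = #{e ∈ G.E i | e ⊆ univ.map f} := by
  rw [← card_map (mapEmbedding f).toEmbedding]
  congr 1
  ext e
  simp only [comap, Finset.mem_map, mem_filter, mem_univ, true_and, RelEmbedding.coe_toEmbedding,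
    mapEmbedding_apply, subset_map_iff, subset_univ]
  constructor
  · rintro ⟨a, ha, rfl⟩
    exact ⟨ha, a, rfl⟩
  · rintro ⟨he, a, rfl⟩
    exact ⟨a, he, rfl⟩

def edgesWithin (G : ColGraph k r n) (S : Finset (Fin n)) : ℕ :=
  ∑ i, #{e ∈ G.E i | e ⊆ S}

lemma edgesWithin_eq_density_comap (G : ColGraph k r n) {S : Finset (Fin n)} (hS : #S = N)
    (hrN : r ≤ N) :
    (G.edgesWithin S : ℝ) = (G.comap (S.orderEmbOfFin hS).toEmbedding).density * N.choose r := by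
  have hpos : (0 : ℝ) < N.choose r := mod_cast Nat.choose_pos hrN
  simp only [density, card_E_comap, map_orderEmbOfFin_univ, edgesWithin, div_mul_cancel₀ _ hpos.ne']
  push_cast
  rfl

lemma edgesWithin_le (G : ColGraph k r n) {S : Finset (Fin n)} (hS : #S = N) (hrN : r ≤ N) :
    (G.edgesWithin S : ℝ) ≤ k * N.choose r := by
  rw [G.edgesWithin_eq_density_comap hS hrN]
  gcongr
  exact density_le _

lemma edgesWithin_le_turanDensityN {H : ColGraph k r m} {G : ColGraph k r n}
    {S : Finset (Fin n)} (hS : #S = N) (hrN : r ≤ N)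
    (hfree : ∀ f, H.IsEmbedding G f → ∃ x, f x ∉ S) :
    (G.edgesWithin S : ℝ) ≤ H.turanDensityN N * N.choose r := by
  rw [G.edgesWithin_eq_density_comap hS hrN]
  gcongr
  refine density_le_turanDensityN fun ⟨g, hg⟩ => ?_
  obtain ⟨x, hx⟩ := hfree _ (IsEmbedding.of_comap hg)
  exact hx (S.orderEmbOfFin_mem hS (g x))

lemma sum_edgesWithin (G : ColGraph k r n) (hrN : r ≤ N) :
    ∑ S ∈ powersetCard N univ, G.edgesWithin S = (∑ i, #(G.E i)) * (n - r).choose (N - r) := by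
  simp only [edgesWithin]
  rw [sum_comm, sum_mul]
  refine sum_congr rfl fun i _ => ?_
  calc ∑ S ∈ powersetCard N univ, #{e ∈ G.E i | e ⊆ S}
      = ∑ e ∈ G.E i, #{S ∈ powersetCard N univ | e ⊆ S} :=
        sum_card_bipartiteAbove_eq_sum_card_bipartiteBelow fun (S e : Finset (Fin n)) => e ⊆ S
    _ = #(G.E i) * (n - r).choose (N - r) := sum_const_nat fun e he => by
        have her := G.card_mem i e he
        have := card_filter_powersetCard_subset e univ N (subset_univ e) (her ▸ hrN)
        rwa [card_univ, Fintype.card_fin, her] at this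

lemma sum_edgesWithin_eq_density_mul (G : ColGraph k r n) (hrN : r ≤ N) (hNn : N ≤ n) :
    ∑ S ∈ powersetCard N univ, (G.edgesWithin S : ℝ) = G.density * n.choose N * N.choose r := by
  have hpos : (0 : ℝ) < n.choose r := mod_cast Nat.choose_pos (hrN.trans hNn)
  have hchoose : (n.choose N * N.choose r : ℝ) = n.choose r * (n - r).choose (N - r) :=
    mod_cast Nat.choose_mul hrN
  rw [← Nat.cast_sum, sum_edgesWithin G hrN, density, mul_assoc, hchoose]
  field_simp
  push_cast
  ring

end Restriction

section Supersaturation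

open scoped Classical

lemma mul_choose_le_card_filter_exists_embedding {H : ColGraph k r m} {G : ColGraph k r n}
    {a δ : ℝ} (hrN : r ≤ N) (hNn : N ≤ n) (hπ : H.turanDensityN N ≤ a) (hG : a + δ ≤ G.density) :
    δ * n.choose N ≤ k * #{S ∈ powersetCard N univ | ∃ f, H.IsEmbedding G f ∧ ∀ x, f x ∈ S} := by
  set P := powersetCard N (univ : Finset (Fin n))
  set Q := {S ∈ P | ∃ f, H.IsEmbedding G f ∧ ∀ x, f x ∈ S}
  have hC : (0 : ℝ) < N.choose r := mod_cast Nat.choose_pos hrN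
  have hP : (#P : ℝ) = n.choose N := by simp [P]
  have hcopy : ∑ S ∈ Q, (G.edgesWithin S : ℝ) ≤ #Q * (k * N.choose r) := by
    rw [← nsmul_eq_mul]
    exact sum_le_card_nsmul _ _ _ fun S hS =>
      G.edgesWithin_le (mem_powersetCard.1 (mem_filter.1 hS).1).2 hrN
  have hfree : ∑ S ∈ P with ¬ ∃ f, H.IsEmbedding G f ∧ ∀ x, f x ∈ S, (G.edgesWithin S : ℝ)
      ≤ n.choose N * (a * N.choose r) := by
    calc _ ≤ #{S ∈ P | ¬ ∃ f, H.IsEmbedding G f ∧ ∀ x, f x ∈ S} • (a * N.choose r) := by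
          refine sum_le_card_nsmul _ _ _ fun S hS => ?_
          obtain ⟨hSP, hS⟩ := mem_filter.1 hS
          push Not at hS
          exact (edgesWithin_le_turanDensityN (mem_powersetCard.1 hSP).2 hrN hS).trans
            (by gcongr)
      _ ≤ #P • (a * N.choose r) := by
          gcongr
          · exact mul_nonneg ((H.turanDensityN_nonneg N).trans hπ) hC.le
          · exact filter_subset _ _
      _ = _ := by rw [nsmul_eq_mul, hP]
  have hsum := sum_filter_add_sum_filter_not P (fun S => ∃ f, H.IsEmbedding G f ∧ ∀ x, f x ∈ S)
    fun S => (G.edgesWithin S : ℝ)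
  rw [G.sum_edgesWithin_eq_density_mul hrN hNn] at hsum
  refine le_of_mul_le_mul_right ?_ hC
  nlinarith [mul_le_mul_of_nonneg_right hG (by positivity : (0 : ℝ) ≤ n.choose N * N.choose r)]

lemma card_filter_exists_embedding_le (H : ColGraph k r m) (G : ColGraph k r n) (hmN : m ≤ N) :
    #{S ∈ powersetCard N univ | ∃ f, H.IsEmbedding G f ∧ ∀ x, f x ∈ S}
      ≤ #{f | H.IsEmbedding G f} * (n - m).choose (N - m) := by
  calc #{S ∈ powersetCard N univ | ∃ f, H.IsEmbedding G f ∧ ∀ x, f x ∈ S}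
      ≤ #(({f | H.IsEmbedding G f} : Finset _).biUnion
          fun f => {S ∈ powersetCard N univ | univ.image f ⊆ S}) := by
        refine card_le_card fun S hS => ?_
        obtain ⟨hSP, f, hf, hfS⟩ := mem_filter.1 hS
        refine mem_biUnion.2 ⟨f, by simpa using hf, mem_filter.2 ⟨hSP, ?_⟩⟩
        simpa [subset_iff] using hfS
    _ ≤ ∑ f ∈ {f | H.IsEmbedding G f}, #{S ∈ powersetCard N univ | univ.image f ⊆ S} :=
        card_biUnion_le
    _ = _ := sum_const_nat fun f hf => by
        have hcard : #(univ.image f) = m := by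
          rw [card_image_of_injective _ (mem_filter.1 hf).2.1, card_univ, Fintype.card_fin]
        have := card_filter_powersetCard_subset (univ.image f) univ N (subset_univ _)
          (hcard.symm ▸ hmN)
        rwa [card_univ, Fintype.card_fin, hcard] at this

theorem supersaturation {H : ColGraph k r m} {G : ColGraph k r n} {a δ : ℝ} (hrN : r ≤ N)
    (hmN : m ≤ N) (hNn : N ≤ n) (hπ : H.turanDensityN N ≤ a) (hG : a + δ ≤ G.density) :
    δ * n.choose m ≤ k * N.choose m * #{f | H.IsEmbedding G f} := by
  have hC : (0 : ℝ) < (n - m).choose (N - m) := mod_cast Nat.choose_pos (by omega)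
  have hchoose : (n.choose N * N.choose m : ℝ) = n.choose m * (n - m).choose (N - m) :=
    mod_cast Nat.choose_mul hmN
  have hQ := mul_choose_le_card_filter_exists_embedding hrN hNn hπ hG
  refine le_of_mul_le_mul_right ?_ hC
  calc δ * n.choose m * (n - m).choose (N - m) = δ * n.choose N * N.choose m := by
        rw [mul_assoc, ← hchoose, mul_assoc]
    _ ≤ k * #{S ∈ powersetCard N univ | ∃ f, H.IsEmbedding G f ∧ ∀ x, f x ∈ S} * N.choose m := by
        gcongr
    _ ≤ k * (#{f | H.IsEmbedding G f} * (n - m).choose (N - m) : ℕ) * N.choose m := by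
        gcongr
        exact card_filter_exists_embedding_le H G hmN
    _ = _ := by push_cast; ring

end Supersaturation

section BlowUp

lemma isSubgraph_blowUp_of_forall_mem_piFinset {H : ColGraph k r m} {G : ColGraph k r n}
    (hs : 1 ≤ s) {W : Fin m → Finset (Fin n)} (hW : ∀ j, #(W j) = s)
    (hWH : ∀ g ∈ Fintype.piFinset W, H.IsEmbedding G g) : (H.blowUp s).IsSubgraph G := by
  classical
  set φ : Fin m × Fin s → Fin n := fun p => (W p.1).orderEmbOfFin (hW p.1) p.2
  have hφW : ∀ p, φ p ∈ W p.1 := fun p => orderEmbOfFin_mem _ _ _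
  -- a map sending `j ≠ j'` to a common point of `W j` and `W j'` would be a non-injective embedding
  have hdisj : ∀ {j j' x}, x ∈ W j → x ∈ W j' → j = j' := by
    intro j j' x hj hj'
    by_contra hne
    set g := Function.update (Function.update (fun j'' => φ (j'', ⟨0, hs⟩)) j x) j' x
    have hg : g ∈ Fintype.piFinset W := Fintype.mem_piFinset.2 fun j'' => by
      by_cases h' : j'' = j'
      · subst h'
        simpa [g] using hj'
      by_cases h : j'' = j
      · subst h
        simpa [g, h'] using hj
      · simpa [g, h, h'] using hφW (j'', ⟨0, hs⟩)
    exact hne ((hWH g hg).1 (by simp [g, hne]))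
  have hφinj : Function.Injective φ := by
    rintro ⟨j, a⟩ ⟨j', b⟩ hab
    obtain rfl : j = j' := hdisj (hφW (j, a)) (hab ▸ hφW (j', b))
    simpa [φ] using hab
  refine ⟨φ ∘ finProdFinEquiv.symm, hφinj.comp finProdFinEquiv.symm.injective, fun i e he => ?_⟩
  obtain ⟨-, hecard, he₀⟩ := mem_filter.1 he
  set proj : Fin (m * s) → Fin m := fun x => (finProdFinEquiv.symm x).1
  have hinj : Set.InjOn proj e := injOn_of_card_image_eq (by rw [H.card_mem i _ he₀, hecard])
  obtain ⟨τ, hτ⟩ : ∃ τ : Fin m → Fin s, ∀ x ∈ e, τ (proj x) = (finProdFinEquiv.symm x).2 := by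
    refine ⟨fun j => if h : ∃ x ∈ e, proj x = j then (finProdFinEquiv.symm h.choose).2
      else ⟨0, hs⟩, fun x hx => ?_⟩
    have h : ∃ y ∈ e, proj y = proj x := ⟨x, hx, rfl⟩
    dsimp only
    rw [dif_pos h, hinj h.choose_spec.1 hx h.choose_spec.2]
  have himage : e.image (φ ∘ finProdFinEquiv.symm) = (e.image proj).image fun j => φ (j, τ j) := by
    rw [image_image]
    refine image_congr fun x hx => ?_
    change φ _ = φ (proj x, τ (proj x))
    rw [hτ x hx]
  rw [himage]
  exact (hWH _ (Fintype.mem_piFinset.2 fun j => hφW _)).2 i _ he₀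

open scoped Classical in
theorem eventually_turanDensityN_blowUp_le (H : ColGraph k r m) (hs : 1 ≤ s) (hrN : r ≤ N)
    (hmN : m ≤ N) {a δ : ℝ} (hδ : 0 < δ) (hπ : H.turanDensityN N ≤ a) :
    ∀ᶠ n in atTop, (H.blowUp s).turanDensityN n ≤ a + δ := by
  have hCNm : (0 : ℝ) < N.choose m := mod_cast Nat.choose_pos hmN
  set γ := δ / ((k + 1) * N.choose m * (2 ^ m * m.factorial))
  filter_upwards [eventually_exists_piFinset_subset s m (δ := γ) (by positivity),
    eventually_ge_atTop (2 * m), eventually_ge_atTop N] with n hbox h2m hNn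
  refine Real.sSup_le ?_ (by linarith [H.turanDensityN_nonneg N])
  rintro _ ⟨G, hfree, rfl⟩
  by_contra! hG
  have hsuper := supersaturation hrN hmN hNn hπ hG.le
  have hchoose : (n : ℝ) ^ m / (2 ^ m * m.factorial) ≤ n.choose m := by
    have h2m' : (2 * m : ℝ) ≤ n := mod_cast h2m
    have := pow_div_factorial_le_choose (x := n / 2) (d := n) (s := m) (by positivity)
      (by linarith)
    rwa [div_pow, div_div] at this
  have hemb : γ * n ^ m ≤ #{f | H.IsEmbedding G f} :=
    calc γ * n ^ m = δ * (n ^ m / (2 ^ m * m.factorial)) / ((k + 1) * N.choose m) := by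
          simp only [γ]
          field_simp
      _ ≤ δ * n.choose m / ((k + 1) * N.choose m) := by gcongr
      _ ≤ k * N.choose m * #{f | H.IsEmbedding G f} / ((k + 1) * N.choose m) := by gcongr
      _ ≤ #{f | H.IsEmbedding G f} := by
          rw [div_le_iff₀ (by positivity)]
          nlinarith
  obtain ⟨W, hW, hWT⟩ := hbox _ hemb
  exact hfree (isSubgraph_blowUp_of_forall_mem_piFinset hs hW fun g hg => (mem_filter.1 (hWT hg)).2)

end BlowUp

end ColGraph

theorem blowup_turan_density_general {k r m : ℕ}
    (H : ColGraph k r m) (s : ℕ) (hs : 1 ≤ s) (c : ℝ)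
    (hH : Filter.Tendsto H.turanDensityN Filter.atTop (nhds c)) :
    Filter.Tendsto (H.blowUp s).turanDensityN Filter.atTop (nhds c) := by
  refine tendsto_order.2 ⟨fun a ha => ?_, fun b hb => ?_⟩
  · filter_upwards [hH.eventually_const_lt ha] with n hn
    exact hn.trans_le (ColGraph.turanDensityN_mono (H.isSubgraph_blowUp hs) n)
  · have hδ : 0 < (b - c) / 3 := by linarith
    obtain ⟨N, hπN, hmN, hrN⟩ := ((hH.eventually_lt_const (by linarith : c < c + (b - c) / 3)).and
      ((eventually_ge_atTop m).and (eventually_ge_atTop r))).exists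
    filter_upwards [H.eventually_turanDensityN_blowUp_le hs hrN hmN hδ hπN.le] with n hn
    linarith

theorem blowup_turan_density {k r m : ℕ} (hr : 2 ≤ r) (hrk : r ≤ k)
    (H : ColGraph k r m) (s : ℕ) (hs : 1 ≤ s) (c : ℝ)
    (hH : Filter.Tendsto H.turanDensityN Filter.atTop (nhds c)) :
    Filter.Tendsto (H.blowUp s).turanDensityN Filter.atTop (nhds c) :=
  blowup_turan_density_general H s hs c hH
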